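/- arXiv:1606.01285 — 2 statements merged into one kernel-verified Lean document; each statement's English description precedes it below -/
import Mathlib

section
/- Let H be strictly convex and differentiable with H(0) = 0, ν > 0, R = {r : H(r) = ν}, and for r ∈ R define z(r) = (ν / <∇H(r), r>) ∇H(r). Then <z(r), r> = ν and <z(r), r'> < ν for every r' ∈ R with r' ≠ r. -/
open InnerProductSpace in
/-- Non-strict gradient inequality for a convex differentiable function. -/
lemma aux_grad_le {d : ℕ} {H : EuclideanSpace ℝ (Fin d) → ℝ}
    (hdiff : Differentiable ℝ H) (hconv : ConvexOn ℝ Set.univ H)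
    (x y : EuclideanSpace ℝ (Fin d)) :
    (inner ℝ (gradient H x) (y - x) : ℝ) ≤ H y - H x := by
  set g : ℝ → ℝ := fun t => H (x + t • (y - x)) with hg
  have hgc : ConvexOn ℝ Set.univ g := by
    have := hconv.comp_affineMap (AffineMap.lineMap x y : ℝ →ᵃ[ℝ] _)
    convert this.subset (Set.subset_univ _) (convex_univ) using 1
    rotate_right
    ext t
    simp only [g, Function.comp_apply, AffineMap.lineMap_apply_module]
    congr 1
    module
    all_goals rfl
  have hc : HasDerivAt (fun t : ℝ => x + t • (y - x)) (y - x) 0 := by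
    simpa using ((hasDerivAt_id (0:ℝ)).smul_const (y - x)).const_add x
  have hF : HasFDerivAt H (toDual ℝ _ (gradient H x)) x :=
    (hdiff x).hasGradientAt
  have hgd : HasDerivAt g ((inner ℝ (gradient H x) (y - x) : ℝ)) 0 := by
    have hF' : HasFDerivAt H (InnerProductSpace.toDual ℝ _ (gradient H x))
        (x + (0:ℝ) • (y - x)) := by simpa using hF
    have := hF'.comp_hasDerivAt 0 hc
    rw [InnerProductSpace.toDual_apply_apply] at this; exact this
  have h01 : (0:ℝ) < 1 := one_pos
  have := hgc.le_slope_of_hasDerivAt (Set.mem_univ 0) (Set.mem_univ 1) h01 hgd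
  have hslope : slope g 0 1 = H y - H x := by
    simp [slope, hg]
  linarith [this.trans_eq hslope]

/-- Strict gradient inequality for a strictly convex differentiable function. -/
lemma aux_grad_lt {d : ℕ} {H : EuclideanSpace ℝ (Fin d) → ℝ}
    (hdiff : Differentiable ℝ H) (hconv : StrictConvexOn ℝ Set.univ H)
    {x y : EuclideanSpace ℝ (Fin d)} (hxy : x ≠ y) :
    H x + (inner ℝ (gradient H x) (y - x) : ℝ) < H y := by
  set m : EuclideanSpace ℝ (Fin d) := (2⁻¹ : ℝ) • x + (2⁻¹ : ℝ) • y with hm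
  have hmid : H m < (2⁻¹ : ℝ) * H x + (2⁻¹ : ℝ) * H y := by
    have := hconv.2 (Set.mem_univ x) (Set.mem_univ y) hxy (by norm_num : (0:ℝ) < 2⁻¹)
      (by norm_num : (0:ℝ) < 2⁻¹) (by norm_num)
    simpa [smul_eq_mul] using this
  have hle : (inner ℝ (gradient H x) (m - x) : ℝ) ≤ H m - H x :=
    aux_grad_le hdiff hconv.convexOn x m
  have hmx : m - x = (2⁻¹ : ℝ) • (y - x) := by
    rw [hm]; module
  rw [hmx, real_inner_smul_right] at hle
  linarith

/-- For `z r = (ν / ⟨∇H r, r⟩) • ∇H r` one has `⟨z r, r⟩ = ν`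
and `⟨z r, r'⟩ < ν` for every other `r'` on the level set `H = ν`. -/
theorem stmt_5 {d : ℕ} (H : EuclideanSpace ℝ (Fin d) → ℝ)
    (hdiff : Differentiable ℝ H)
    (hconv : StrictConvexOn ℝ Set.univ H) (h0 : H 0 = 0)
    (ν : ℝ) (hν : 0 < ν)
    (z : EuclideanSpace ℝ (Fin d) → EuclideanSpace ℝ (Fin d))
    (hz : ∀ r, z r = (ν / (inner ℝ (gradient H r) r : ℝ)) • gradient H r)
    (r : EuclideanSpace ℝ (Fin d)) (hr : H r = ν) :
    (inner ℝ (z r) r : ℝ) = ν ∧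
    ∀ r' : EuclideanSpace ℝ (Fin d), H r' = ν → r' ≠ r →
      (inner ℝ (z r) r' : ℝ) < ν := by
  have hr0 : r ≠ 0 := by
    intro h; rw [h, h0] at hr; exact absurd hr.symm hν.ne'
  have hkey : ν < (inner ℝ (gradient H r) r : ℝ) := by
    have := aux_grad_lt hdiff hconv (x := r) (y := 0) hr0
    rw [h0, hr] at this
    have h2 : (inner ℝ (gradient H r) ((0:EuclideanSpace ℝ (Fin d)) - r) : ℝ)
        = -(inner ℝ (gradient H r) r : ℝ) := by
      rw [zero_sub, inner_neg_right]
    rw [h2] at this; linarith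
  have hc : (0:ℝ) < (inner ℝ (gradient H r) r : ℝ) := hν.trans hkey
  constructor
  · rw [hz, real_inner_smul_left, div_mul_cancel₀ _ hc.ne']
  · intro r' hr' hne
    have hlt : (inner ℝ (gradient H r) r' : ℝ) < (inner ℝ (gradient H r) r : ℝ) := by
      have := aux_grad_lt hdiff hconv (x := r) (y := r') (Ne.symm hne)
      rw [hr, hr'] at this
      rw [inner_sub_right] at this
      linarith
    rw [hz, real_inner_smul_left]
    calc ν / (inner ℝ (gradient H r) r : ℝ) * (inner ℝ (gradient H r) r' : ℝ)
        < ν / (inner ℝ (gradient H r) r : ℝ) * (inner ℝ (gradient H r) r : ℝ) := by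
          exact mul_lt_mul_of_pos_left hlt (div_pos hν hc)
      _ = ν := div_mul_cancel₀ _ hc.ne'
end

section
/- Suppose f, g : [0,∞) → [0,∞) are measurable, g is bounded, η : [0,∞) → [0,∞) is integrable with ∫₀^∞ η(u) du < 1, and f satisfies the renewal inequality f(t) ≤ g(t) + (f ∗ η)(t) for all t ≥ 0, where (f∗η)(t) = ∫₀^t f(t−u)η(u) du. If f is bounded on bounded intervals, then f is bounded on [0,∞) with sup f ≤ (sup g)/(1 − ∫₀^∞ η). -/
open MeasureTheory Set

/-- Renewal inequality bound: if `f ≤ g + f ∗ η` with `g` bounded,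
`f` nonnegative, measurable and locally bounded, and `η ≥ 0` integrable with
total mass `< 1`, then `f` is bounded with `sup f ≤ (sup g)/(1 - ∫ η)`. -/
theorem stmt_19 (f g η : ℝ → ℝ)
    (hfmeas : Measurable f) (hgmeas : Measurable g)
    (hf0 : ∀ t ∈ Ici (0 : ℝ), 0 ≤ f t) (hg0 : ∀ t ∈ Ici (0 : ℝ), 0 ≤ g t)
    (hgbdd : BddAbove (g '' Ici (0 : ℝ)))
    (hη0 : ∀ u ∈ Ici (0 : ℝ), 0 ≤ η u)
    (hηint : IntegrableOn η (Ici (0 : ℝ)))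
    (hηmass : (∫ u in Ici (0 : ℝ), η u) < 1)
    (hfloc : ∀ T : ℝ, BddAbove (f '' Icc (0 : ℝ) T))
    (hren : ∀ t ∈ Ici (0 : ℝ),
      f t ≤ g t + ∫ u in (0 : ℝ)..t, f (t - u) * η u) :
    ∀ t ∈ Ici (0 : ℝ),
      f t ≤ sSup (g '' Ici (0 : ℝ)) / (1 - ∫ u in Ici (0 : ℝ), η u) := by
  have hρ0 : 0 ≤ ∫ u in Ici (0:ℝ), η u :=
    setIntegral_nonneg measurableSet_Ici hη0
  set ρ := ∫ u in Ici (0:ℝ), η u with hρ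
  have h1ρ : 0 < 1 - ρ := by linarith
  have hG0 : 0 ≤ sSup (g '' Ici (0:ℝ)) :=
    le_trans (hg0 0 self_mem_Ici) (le_csSup hgbdd ⟨0, self_mem_Ici, rfl⟩)
  set G := sSup (g '' Ici (0:ℝ)) with hGdef
  intro t ht
  set M := sSup (f '' Icc (0:ℝ) t) with hMdef
  have htmem : t ∈ Icc (0:ℝ) t := ⟨ht, le_rfl⟩
  have hne : (f '' Icc (0:ℝ) t).Nonempty := ⟨f t, t, htmem, rfl⟩
  have hfM : ∀ s ∈ Icc (0:ℝ) t, f s ≤ M := fun s hs => le_csSup (hfloc t) ⟨s, hs, rfl⟩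
  have hM0 : 0 ≤ M := le_trans (hf0 t ht) (hfM t htmem)
  have key : M ≤ G + M * ρ := by
    apply csSup_le hne
    rintro x ⟨s, hs, rfl⟩
    have hs0 : (0:ℝ) ≤ s := hs.1
    have hηs : IntegrableOn η (Icc 0 s) := hηint.mono_set Icc_subset_Ici_self
    have hηIs : IntervalIntegrable η volume 0 s := by
      rw [intervalIntegrable_iff_integrableOn_Icc_of_le hs0]; exact hηs
    have hfη : IntegrableOn (fun u => f (s - u) * η u) (Icc 0 s) := by
      apply Integrable.mono' (hηs.const_mul M)
      · exact ((hfmeas.comp (measurable_const.sub measurable_id)).aestronglyMeasurable).mul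
          hηs.1
      · filter_upwards [ae_restrict_mem measurableSet_Icc] with u hu
        have h1 : s - u ∈ Icc (0:ℝ) t := ⟨by linarith [hu.1, hu.2], by linarith [hu.1, hs.2]⟩
        have h2 : 0 ≤ η u := hη0 u hu.1
        rw [Real.norm_eq_abs, abs_of_nonneg (mul_nonneg (hf0 _ h1.1) h2)]
        exact mul_le_mul_of_nonneg_right (hfM _ h1) h2
    have hfηI : IntervalIntegrable (fun u => f (s - u) * η u) volume 0 s := by
      rw [intervalIntegrable_iff_integrableOn_Icc_of_le hs0]; exact hfη
    have step1 : (∫ u in (0:ℝ)..s, f (s - u) * η u) ≤ ∫ u in (0:ℝ)..s, M * η u := by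
      apply intervalIntegral.integral_mono_on hs0 hfηI (hηIs.const_mul M)
      intro u hu
      have h1 : s - u ∈ Icc (0:ℝ) t := ⟨by linarith [hu.1, hu.2], by linarith [hu.1, hs.2]⟩
      exact mul_le_mul_of_nonneg_right (hfM _ h1) (hη0 u hu.1)
    have step2 : (∫ u in (0:ℝ)..s, η u) ≤ ρ := by
      rw [intervalIntegral.integral_of_le hs0, hρ]
      apply setIntegral_mono_set hηint
      · filter_upwards [ae_restrict_mem measurableSet_Ici] with u hu using hη0 u hu
      · exact HasSubset.Subset.eventuallyLE (fun x hx => le_of_lt hx.1)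
    have hgs : g s ≤ G := le_csSup hgbdd ⟨s, hs.1, rfl⟩
    calc f s ≤ g s + ∫ u in (0:ℝ)..s, f (s - u) * η u := hren s hs.1
      _ ≤ G + M * ρ := by
          rw [intervalIntegral.integral_const_mul] at step1
          have : (∫ u in (0:ℝ)..s, f (s - u) * η u) ≤ M * ρ :=
            step1.trans (mul_le_mul_of_nonneg_left step2 hM0)
          linarith
  have hMle : M ≤ G / (1 - ρ) := by
    rw [le_div_iff₀ h1ρ]; nlinarith
  exact (hfM t htmem).trans hMle
end
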